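/- Let p be a prime with −1 a residue and 2, 3 non-residues mod p, and suppose A ⊔ B is a reduction of 𝒫_p splitting the Hamiltonian cycle (0,1,…,p−1,0) into segments whose shortest segment R_1 = (−⌊l/2⌋,…,⌊l/2⌋ or ⌊l/2⌋+1) has even length l with 2 ≤ l ≤ p/4. Then every element of the integer interval [l/2 + 1, 3l/2 + 1] is a quadratic non-residue mod p. -/

import Mathlib

open scoped Classical

/-- `a` is a (nonzero) quadratic residue in `ZMod p`. -/
def IsQR (p : ℕ) (a : ZMod p) : Prop := a ≠ 0 ∧ IsSquare a

/-- The Paley graph on `𝔽_p`: `a ~ b` iff `a - b` is a nonzero quadratic residue.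
(The adjacency is stated symmetrically; when `-1` is a residue this agrees with
the usual definition.) -/
def paley (p : ℕ) : SimpleGraph (ZMod p) where
  Adj a b := a ≠ b ∧ IsSquare (a - b) ∧ IsSquare (b - a)
  symm := ⟨by intro a b h; exact ⟨h.1.symm, h.2.2, h.2.1⟩⟩
  loopless := ⟨by intro a h; exact h.1 rfl⟩

/-- The list of vertices of the path `P_{a,b}` of the path system `𝒫_p`. -/
noncomputable def specList (p : ℕ) (a b : ZMod p) : List (ZMod p) :=
  if IsQR p (b - a) then [a, b]
  else if b - a = 3 then [a, a + 1, a + 2, b]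
  else [a, (a + b) * (2 : ZMod p)⁻¹, b]

/-! For `b` a residue in the outer segment `[l/2 + 1, 3l/2 + 1]`, both `b` and `-b` lie in `B`.
Since `2` is a non-residue, so is `b - (-b) = 2b`, and as `0 < 2b - 3 < 2b < p` (from `4l < p`)
the path `P_{-b,b}` is the midpoint path `(-b, 0, b)`. Closedness of `B` then puts `0 ∈ R₁ ⊆ A` into `B`. -/

def IsPathClosed (p : ℕ) (S : Set (ZMod p)) : Prop :=
  ∀ u ∈ S, ∀ v ∈ S, u ≠ v → ∀ w ∈ specList p u v, w ∈ S

lemma not_isQR_mul {p : ℕ} [Fact p.Prime] {a b : ZMod p}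
    (ha : ¬ IsQR p a) (hb : IsQR p b) : ¬ IsQR p (a * b) := by
  rintro ⟨hab, hsq⟩
  refine ha ⟨left_ne_zero_of_mul hab, ?_⟩
  simpa [mul_assoc, mul_inv_cancel₀ hb.1] using hsq.mul hb.2.inv

lemma midpoint_mem_specList {p : ℕ} {a b : ZMod p}
    (hqr : ¬ IsQR p (b - a)) (h3 : b - a ≠ 3) : (a + b) * (2 : ZMod p)⁻¹ ∈ specList p a b := by
  simp [specList, hqr, h3]

lemma IsPathClosed.zero_mem {p : ℕ} {S : Set (ZMod p)} (hS : IsPathClosed p S) {b : ZMod p}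
    (hb : b ∈ S) (hnb : -b ∈ S) (h0 : 2 * b ≠ 0) (hqr : ¬ IsQR p (2 * b)) (h3 : 2 * b ≠ 3) :
    (0 : ZMod p) ∈ S := by
  have hsub : b - -b = 2 * b := by ring
  have hne : -b ≠ b := fun h => h0 (by rw [← hsub, h, sub_self])
  simpa using hS (-b) hnb b hb hne _ (midpoint_mem_specList (hsub ▸ hqr) (hsub ▸ h3))

lemma intCast_ne_zero_of_pos_of_lt {p : ℕ} {n : ℤ} (h0 : 0 < n) (hn : n < p) :
    (n : ZMod p) ≠ 0 := by
  rw [Ne, ZMod.intCast_zmod_eq_zero_iff_dvd]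
  exact fun h => absurd (Int.le_of_dvd h0 h) (not_le.mpr hn)

theorem stmt_13_general (p : ℕ) [Fact p.Prime]
    (h2 : ¬ IsQR p 2)
    (A B : Set (ZMod p))
    -- `A ⊔ B` is a reduction of `𝒫_p`:
    (hdisj : ∀ v, ¬ (v ∈ A ∧ v ∈ B))
    (hredB : ∀ u ∈ B, ∀ v ∈ B, u ≠ v → ∀ w ∈ specList p u v, w ∈ B)
    -- the shortest segment has even length `l` with `2 ≤ l ≤ p/4`:
    (l : ℕ) (hl2 : 2 ≤ l) (hl4 : 4 * l ≤ p)
    -- the shortest segment `R₁ = (-l/2, …, l/2)` lies in `A`: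
    (hR1 : ∀ i : ℤ, -((l : ℤ) / 2) ≤ i → i ≤ (l : ℤ) / 2 → (i : ZMod p) ∈ A)
    -- the two adjacent segments have length at least `l` and lie in `B`:
    (hR2 : ∀ i : ℤ, (l : ℤ) / 2 + 1 ≤ i → i ≤ 3 * (l : ℤ) / 2 + 1 → (i : ZMod p) ∈ B)
    (hR2k : ∀ i : ℤ, -(3 * (l : ℤ) / 2 + 1) ≤ i → i ≤ -((l : ℤ) / 2 + 1) →
      (i : ZMod p) ∈ B) :
    ∀ i : ℤ, (l : ℤ) / 2 + 1 ≤ i → i ≤ 3 * (l : ℤ) / 2 + 1 →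
      ¬ IsQR p (i : ZMod p) := by
  intro i hi1 hi2 hqr
  have hp : 4 * l < p := hl4.lt_of_ne fun h =>
    absurd ((Fact.out : p.Prime).even_iff.mp ⟨2 * l, by omega⟩) (by omega)
  have h2i : (2 * i : ℤ) < p := by omega
  have hnb : ((-i : ℤ) : ZMod p) ∈ B := hR2k (-i) (by omega) (by omega)
  have h0B : (0 : ZMod p) ∈ B := by
    refine IsPathClosed.zero_mem hredB (hR2 i hi1 hi2) (by simpa using hnb)
      (by exact_mod_cast intCast_ne_zero_of_pos_of_lt (by omega) h2i)
      (not_isQR_mul h2 hqr) fun h => ?_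
    have : ((2 * i - 3 : ℤ) : ZMod p) = 0 := by push_cast; rw [h, sub_self]
    exact intCast_ne_zero_of_pos_of_lt (by omega) (by omega) this
  exact hdisj 0 ⟨by simpa using hR1 0 (by omega) (by omega), h0B⟩

theorem stmt_13 (p : ℕ) [Fact p.Prime]
    (h1 : IsQR p (-1)) (h2 : ¬ IsQR p 2) (h3 : ¬ IsQR p 3)
    (A B : Set (ZMod p))
    -- `A ⊔ B` is a reduction of `𝒫_p`:
    (hAne : A.Nonempty) (hBne : B.Nonempty)
    (hcover : ∀ v, v ∈ A ∨ v ∈ B) (hdisj : ∀ v, ¬ (v ∈ A ∧ v ∈ B))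
    (hredA : ∀ u ∈ A, ∀ v ∈ A, u ≠ v → ∀ w ∈ specList p u v, w ∈ A)
    (hredB : ∀ u ∈ B, ∀ v ∈ B, u ≠ v → ∀ w ∈ specList p u v, w ∈ B)
    -- the shortest segment has even length `l` with `2 ≤ l ≤ p/4`:
    (l : ℕ) (hEven : Even l) (hl2 : 2 ≤ l) (hl4 : 4 * l ≤ p)
    -- the shortest segment `R₁ = (-l/2, …, l/2)` lies in `A`:
    (hR1 : ∀ i : ℤ, -((l : ℤ) / 2) ≤ i → i ≤ (l : ℤ) / 2 → (i : ZMod p) ∈ A)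
    -- the two adjacent segments have length at least `l` and lie in `B`:
    (hR2 : ∀ i : ℤ, (l : ℤ) / 2 + 1 ≤ i → i ≤ 3 * (l : ℤ) / 2 + 1 → (i : ZMod p) ∈ B)
    (hR2k : ∀ i : ℤ, -(3 * (l : ℤ) / 2 + 1) ≤ i → i ≤ -((l : ℤ) / 2 + 1) →
      (i : ZMod p) ∈ B) :
    ∀ i : ℤ, (l : ℤ) / 2 + 1 ≤ i → i ≤ 3 * (l : ℤ) / 2 + 1 →
      ¬ IsQR p (i : ZMod p) :=
  stmt_13_general p h2 A B hdisj hredB l hl2 hl4 hR1 hR2 hR2k
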